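/- Let 𝒮 be a circular split system on a finite set X with |X| ≥ 4, and let 𝒮' be a split system on X that is properly contained in 𝒮. Then 𝒮' is not injective. -/

import Mathlib

/-! A split `S ∈ 𝒮 − 𝒮'` is non-trivial, so it is the split of an arc `x_i, …, x_j` of the circle
whose complement also has at least two elements. The triples `{x_{i-1}, x_i, x_j}` and
`{x_{i-1}, x_i, x_{j+1}}` are told apart by a split only if it separates `x_{i-1}` from `x_i` and
`x_j` from `x_{j+1}`, i.e. cuts the circle at both ends of the arc; the only circular split doing
so is `S` itself, which is missing from `𝒮'`. -/

namespace InjectiveSplitSystems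

open Finset

variable {α : Type*} [DecidableEq α]

/-- A split of `X`: an unordered bipartition of `X` into two nonempty disjoint parts,
represented as the two-element set `{A, B}` of its parts. -/
def IsSplit (X : Finset α) (S : Finset (Finset α)) : Prop :=
  ∃ A B : Finset α, S = {A, B} ∧ A ∪ B = X ∧ A ∩ B = ∅ ∧ A ≠ ∅ ∧ B ≠ ∅

/-- `S` is an `r`-split of `X`: a split of `X` whose minimum part size is `r`. -/
def IsRSplit (X : Finset α) (r : ℕ) (S : Finset (Finset α)) : Prop :=
  IsSplit X S ∧ (∃ A ∈ S, A.card = r) ∧ ∀ A ∈ S, r ≤ A.card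

/-- A split system on `X`: a set of splits of `X` containing all trivial splits
`{x} | X \ {x}`, `x ∈ X`. -/
def IsSplitSystem (X : Finset α) (𝒮 : Finset (Finset (Finset α))) : Prop :=
  (∀ S ∈ 𝒮, IsSplit X S) ∧ ∀ x ∈ X, ({{x}, X \ {x}} : Finset (Finset α)) ∈ 𝒮

/-- `phiNe Y Y' S` says `φ_Y(S) ≠ φ_{Y'}(S)`: the part of `S` containing at least two
elements of the 3-set `Y` differs from the part of `S` containing at least two
elements of the 3-set `Y'`. -/
def phiNe (Y Y' : Finset α) (S : Finset (Finset α)) : Prop :=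
  ∃ t ∈ S, ∃ t' ∈ S, t ≠ t' ∧ 2 ≤ (Y ∩ t).card ∧ 2 ≤ (Y' ∩ t').card

/-- A split system on `X` is injective if for all distinct 3-subsets `Y`, `Y'` of `X`
there is a split `S ∈ 𝒮` with `φ_Y(S) ≠ φ_{Y'}(S)`. -/
def IsInjective (X : Finset α) (𝒮 : Finset (Finset (Finset α))) : Prop :=
  ∀ Y Y' : Finset α, Y ⊆ X → Y' ⊆ X → Y.card = 3 → Y'.card = 3 → Y ≠ Y' →
    ∃ S ∈ 𝒮, phiNe Y Y' S

/-- The restriction `S|_Y` of a split to `Y`, as the set of restricted parts. -/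
def restrictSplit (S : Finset (Finset α)) (Y : Finset α) : Finset (Finset α) :=
  S.image (· ∩ Y)

open scoped Classical in
/-- The restriction `𝒮|_Y` of a split system to `Y`: all splits
`(A ∩ Y) | (B ∩ Y)` with `A|B ∈ 𝒮` and both intersections nonempty. -/
noncomputable def restrictSS (𝒮 : Finset (Finset (Finset α))) (Y : Finset α) :
    Finset (Finset (Finset α)) :=
  (𝒮.image fun S => restrictSplit S Y).filter fun T => ∀ t ∈ T, t ≠ ∅

/-- `𝒮` 4-dices `X`. -/
def FourDices (X : Finset α) (𝒮 : Finset (Finset (Finset α))) : Prop :=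
  X.card < 4 ∨ ∀ Y ⊆ X, Y.card = 4 →
    ∃ 𝒯 ⊆ restrictSS 𝒮 Y, 2 ≤ 𝒯.card ∧ ∀ S ∈ 𝒯, IsRSplit Y 2 S

/-- `𝒮` 5-dices `X`. -/
def FiveDices (X : Finset α) (𝒮 : Finset (Finset (Finset α))) : Prop :=
  X.card < 5 ∨ ∀ Y ⊆ X, Y.card = 5 →
    ∃ 𝒯 ⊆ restrictSS 𝒮 Y, 5 ≤ 𝒯.card ∧ ∀ S ∈ 𝒯, IsRSplit Y 2 S

/-- `𝒮` 6-dices `X`: every 6-subset restriction contains a 3-split or a triangle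
of 2-splits. -/
def SixDices (X : Finset α) (𝒮 : Finset (Finset (Finset α))) : Prop :=
  X.card < 6 ∨ ∀ Y ⊆ X, Y.card = 6 →
    (∃ S ∈ restrictSS 𝒮 Y, IsRSplit Y 3 S) ∨
    (∃ x ∈ Y, ∃ y ∈ Y, ∃ z ∈ Y, x ≠ y ∧ x ≠ z ∧ y ≠ z ∧
      ({{x, y}, Y \ {x, y}} : Finset (Finset α)) ∈ restrictSS 𝒮 Y ∧
      ({{x, z}, Y \ {x, z}} : Finset (Finset α)) ∈ restrictSS 𝒮 Y ∧
      ({{y, z}, Y \ {y, z}} : Finset (Finset α)) ∈ restrictSS 𝒮 Y)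

/-- Two splits are incompatible if they are distinct and all four pairwise
intersections of their parts are nonempty. -/
def Incompatible (S T : Finset (Finset α)) : Prop :=
  S ≠ T ∧ ∀ A ∈ S, ∀ B ∈ T, A ∩ B ≠ ∅

open scoped Classical in
/-- The dimension of a split system: maximum size of a pairwise incompatible subset
(which is `1` when all splits are pairwise compatible and `𝒮` is nonempty). -/
noncomputable def dimSS (𝒮 : Finset (Finset (Finset α))) : ℕ :=
  (𝒮.powerset.filter fun 𝒯 => ∀ S ∈ 𝒯, ∀ T ∈ 𝒯, S ≠ T → Incompatible S T).sup Finset.card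

/-- The injective dimension `ID(n)`: minimum dimension of an injective split system
on `{1, …, n}`. -/
noncomputable def ID (n : ℕ) : ℕ :=
  sInf {d : ℕ | ∃ 𝒮 : Finset (Finset (Finset ℕ)),
    IsSplitSystem (Finset.Icc 1 n) 𝒮 ∧ IsInjective (Finset.Icc 1 n) 𝒮 ∧ dimSS 𝒮 = d}

/-- The injective 2-split dimension `ID₂(n)`: minimum dimension of an injective split
system on `{1, …, n}` all of whose non-trivial splits have size 2. -/
noncomputable def ID2 (n : ℕ) : ℕ :=
  sInf {d : ℕ | ∃ 𝒮 : Finset (Finset (Finset ℕ)),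
    IsSplitSystem (Finset.Icc 1 n) 𝒮 ∧ IsInjective (Finset.Icc 1 n) 𝒮 ∧
    (∀ S ∈ 𝒮, IsRSplit (Finset.Icc 1 n) 1 S ∨ IsRSplit (Finset.Icc 1 n) 2 S) ∧
    dimSS 𝒮 = d}

/-- `𝒮` is rooted-injective relative to `r`. -/
def IsRootedInjective (X : Finset α) (r : α) (𝒮 : Finset (Finset (Finset α))) : Prop :=
  ∀ Z Z' : Finset α, Z ⊆ X \ {r} → Z' ⊆ X \ {r} → Z.card = 2 → Z'.card = 2 → Z ≠ Z' →
    ∃ S ∈ 𝒮, phiNe (insert r Z) (insert r Z') S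

/-- The rooted-injective dimension `ID^r(n)`: minimum dimension of a split system on an
`n`-element set that is rooted-injective relative to a given element. -/
noncomputable def IDr (n : ℕ) : ℕ :=
  sInf {d : ℕ | ∃ 𝒮 : Finset (Finset (Finset ℕ)),
    IsSplitSystem (Finset.Icc 1 n) 𝒮 ∧ IsRootedInjective (Finset.Icc 1 n) 1 𝒮 ∧
    dimSS 𝒮 = d}

/-- `𝒮` is circular: there is a labelling `x_1, …, x_n` of `X` such that every split
of `𝒮` has the form `{x_i, …, x_j} | complement`. -/
def IsCircular (X : Finset α) (𝒮 : Finset (Finset (Finset α))) : Prop :=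
  ∃ f : ℕ → α, Set.InjOn f ↑(Finset.Icc 1 X.card) ∧
    (Finset.Icc 1 X.card).image f = X ∧
    ∀ S ∈ 𝒮, ∃ i j : ℕ, 1 ≤ i ∧ i ≤ j ∧ j ≤ X.card ∧
      S = {(Finset.Icc i j).image f, X \ (Finset.Icc i j).image f}

/-- `𝒮` is maximal circular: circular and not properly contained in any circular
split system on `X`. -/
def IsMaximalCircular (X : Finset α) (𝒮 : Finset (Finset (Finset α))) : Prop :=
  IsCircular X 𝒮 ∧ ∀ 𝒮' : Finset (Finset (Finset α)),
    IsSplitSystem X 𝒮' → IsCircular X 𝒮' → 𝒮 ⊆ 𝒮' → 𝒮' = 𝒮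

/-- The degree of `x` in the graph `P(𝒮)` on vertex set `X` whose edges are the
pairs `{x, y}` with `xy | X − {x,y} ∈ 𝒮`. -/
def degP (X : Finset α) (𝒮 : Finset (Finset (Finset α))) (x : α) : ℕ :=
  ((X \ {x}).filter fun y => ({{x, y}, X \ {x, y}} : Finset (Finset α)) ∈ 𝒮).card

/-- `P(𝒮)` contains a 3-clique. -/
def HasTriangle (X : Finset α) (𝒮 : Finset (Finset (Finset α))) : Prop :=
  ∃ x ∈ X, ∃ y ∈ X, ∃ z ∈ X, x ≠ y ∧ x ≠ z ∧ y ≠ z ∧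
    ({{x, y}, X \ {x, y}} : Finset (Finset α)) ∈ 𝒮 ∧
    ({{x, z}, X \ {x, z}} : Finset (Finset α)) ∈ 𝒮 ∧
    ({{y, z}, X \ {y, z}} : Finset (Finset α)) ∈ 𝒮

/-- Conditions (B1) and (B2) for a map to be a vertex of the Buneman graph. -/
def IsBunemanVertex (𝒮 : Finset (Finset (Finset α))) (φ : {S // S ∈ 𝒮} → Finset α) : Prop :=
  (∀ S, φ S ∈ S.1) ∧ ∀ S S', S ≠ S' → (φ S ∩ φ S').Nonempty

/-- The vertex set of the Buneman graph `B(𝒮)`. -/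
abbrev BunemanVertex (𝒮 : Finset (Finset (Finset α))) : Type _ :=
  {φ : {S // S ∈ 𝒮} → Finset α // IsBunemanVertex 𝒮 φ}

/-- The Buneman graph `B(𝒮)`: two vertices are adjacent iff they differ on exactly
one split. -/
def BunemanGraph (𝒮 : Finset (Finset (Finset α))) : SimpleGraph (BunemanVertex 𝒮) where
  Adj φ ψ := ∃! S, φ.1 S ≠ ψ.1 S
  symm := by
    refine ⟨?_⟩
    rintro φ ψ ⟨S, hS, hU⟩
    exact ⟨S, hS.symm, fun T hT => hU T hT.symm⟩
  loopless := by
    refine ⟨?_⟩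
    rintro φ ⟨S, hS, -⟩
    exact hS rfl

/-- `m` is a median of `u`, `v`, `w` in the graph `G`. -/
def IsMedian {V : Type*} (G : SimpleGraph V) (u v w m : V) : Prop :=
  G.dist u m + G.dist m v = G.dist u v ∧
  G.dist v m + G.dist m w = G.dist v w ∧
  G.dist u m + G.dist m w = G.dist u w

theorem IsSplit.nonempty_of_mem {X : Finset α} {S : Finset (Finset α)} (hS : IsSplit X S)
    {t : Finset α} (ht : t ∈ S) : t.Nonempty := by
  obtain ⟨A, B, rfl, -, -, hA, hB⟩ := hS
  rw [mem_insert, mem_singleton] at ht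
  rcases ht with rfl | rfl
  exacts [nonempty_iff_ne_empty.2 hA, nonempty_iff_ne_empty.2 hB]

theorem two_le_card_of_split_notMem {X A : Finset α} {𝒮 : Finset (Finset (Finset α))}
    (h𝒮 : IsSplitSystem X 𝒮) (hA : A ⊆ X) (hsplit : IsSplit X {A, X \ A})
    (hnot : {A, X \ A} ∉ 𝒮) : 2 ≤ A.card ∧ 2 ≤ (X \ A).card := by
  constructor
  · by_contra! h
    have hpos := (hsplit.nonempty_of_mem (mem_insert_self _ _)).card_pos
    obtain ⟨x, rfl⟩ := card_eq_one.1 (by omega : A.card = 1)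
    exact hnot (h𝒮.2 x (hA (mem_singleton_self x)))
  · by_contra! h
    have hpos := (hsplit.nonempty_of_mem (mem_insert_of_mem (mem_singleton_self _))).card_pos
    obtain ⟨x, hx⟩ := card_eq_one.1 (by omega : (X \ A).card = 1)
    have hxX : x ∈ X := (mem_sdiff.1 (hx ▸ mem_singleton_self x)).1
    have hAx : A = X \ {x} := by rw [← hx, Finset.sdiff_sdiff_eq_self hA]
    apply hnot
    rw [hx, hAx, pair_comm]
    exact h𝒮.2 x hxX

theorem mem_and_mem_of_two_le_card_inter {a b c : α} {t : Finset α}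
    (h : 2 ≤ (({a, b, c} : Finset α) ∩ t).card) :
    (a ∈ t ∧ b ∈ t) ∨ (a ∈ t ∧ c ∈ t) ∨ (b ∈ t ∧ c ∈ t) := by
  obtain ⟨x, hx, y, hy, hxy⟩ := one_lt_card.1 h
  simp only [mem_inter, mem_insert, mem_singleton] at hx hy
  obtain ⟨hx, hxt⟩ := hx
  obtain ⟨hy, hyt⟩ := hy
  rcases hx with rfl | rfl | rfl <;> rcases hy with rfl | rfl | rfl <;> tauto

theorem separates_of_phiNe {X C : Finset α} {a b c c' : α}
    (h : phiNe {a, b, c} {a, b, c'} {C, X \ C}) : (a ∈ C ↔ b ∉ C) ∧ (c ∈ C ↔ c' ∉ C) := by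
  obtain ⟨t, ht, t', ht', hne, h, h'⟩ := h
  have h₁ := mem_and_mem_of_two_le_card_inter h
  have h₂ := mem_and_mem_of_two_le_card_inter h'
  simp only [mem_insert, mem_singleton] at ht ht'
  rcases ht with rfl | rfl <;> rcases ht' with rfl | rfl <;>
    first
    | exact absurd rfl hne
    | (simp only [mem_sdiff] at h₁ h₂; tauto)

def cyclicPred (n i : ℕ) : ℕ := if i = 1 then n else i - 1

def cyclicSucc (n j : ℕ) : ℕ := if j = n then 1 else j + 1

theorem cyclicPred_mem_Icc {n i : ℕ} (hi : i ∈ Icc 1 n) : cyclicPred n i ∈ Icc 1 n := by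
  simp only [mem_Icc, cyclicPred] at *
  split_ifs <;> omega

theorem cyclicSucc_mem_Icc {n j : ℕ} (hj : j ∈ Icc 1 n) : cyclicSucc n j ∈ Icc 1 n := by
  simp only [mem_Icc, cyclicSucc] at *
  split_ifs <;> omega

theorem Icc_eq_or_eq_sdiff_of_separates {n i j k l : ℕ} (hi : 1 ≤ i) (hij : i ≤ j)
    (hj : j ≤ n) (hproper : ¬(i = 1 ∧ j = n)) (hk : 1 ≤ k) (hkl : k ≤ l) (hl : l ≤ n)
    (hpred : cyclicPred n i ∈ Icc k l ↔ i ∉ Icc k l)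
    (hsucc : j ∈ Icc k l ↔ cyclicSucc n j ∉ Icc k l) :
    Icc k l = Icc i j ∨ Icc k l = Icc 1 n \ Icc i j := by
  simp only [mem_Icc, cyclicPred, cyclicSucc] at hpred hsucc
  have : (k = i ∧ l = j) ∨ (i = 1 ∧ k = j + 1 ∧ l = n) ∨ (j = n ∧ k = 1 ∧ l + 1 = i) := by
    split_ifs at hpred hsucc <;> omega
  rcases this with ⟨rfl, rfl⟩ | ⟨rfl, rfl, rfl⟩ | ⟨rfl, rfl, hli⟩
  · exact .inl rfl
  all_goals
    refine .inr (ext fun m => ?_)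
    simp only [mem_Icc, mem_sdiff]
    omega

theorem mem_image_iff_of_injOn {β : Type*} {f : β → α} {s t : Finset β} (hf : Set.InjOn f s)
    (ht : t ⊆ s) {x : β} (hx : x ∈ s) : f x ∈ t.image f ↔ x ∈ t := by
  simpa using hf.mem_image_iff (coe_subset.2 ht) hx

section Labelling

variable {X : Finset α} {f : ℕ → α}

theorem split_eq_of_phiNe_boundary (hf : Set.InjOn f ↑(Icc 1 X.card))
    (hfX : (Icc 1 X.card).image f = X) {i j k l : ℕ} (hi : 1 ≤ i) (hij : i ≤ j)
    (hj : j ≤ X.card) (hproper : ¬(i = 1 ∧ j = X.card)) (hk : 1 ≤ k) (hkl : k ≤ l)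
    (hl : l ≤ X.card)
    (h : phiNe {f (cyclicPred X.card i), f i, f j} {f (cyclicPred X.card i), f i,
      f (cyclicSucc X.card j)} {(Icc k l).image f, X \ (Icc k l).image f}) :
    ({(Icc k l).image f, X \ (Icc k l).image f} : Finset (Finset α)) =
      {(Icc i j).image f, X \ (Icc i j).image f} := by
  have hiI : i ∈ Icc 1 X.card := mem_Icc.2 ⟨hi, hij.trans hj⟩
  have hjI : j ∈ Icc 1 X.card := mem_Icc.2 ⟨hi.trans hij, hj⟩
  obtain ⟨hpred, hsucc⟩ := separates_of_phiNe h
  simp only [mem_image_iff_of_injOn hf (Icc_subset_Icc hk hl), hiI, hjI, cyclicPred_mem_Icc,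
    cyclicSucc_mem_Icc] at hpred hsucc
  rcases Icc_eq_or_eq_sdiff_of_separates hi hij hj hproper hk hkl hl hpred hsucc with h | h
  · rw [h]
  · rw [h, image_sdiff_of_injOn hf (Icc_subset_Icc hi hj), hfX,
      Finset.sdiff_sdiff_eq_self (hfX ▸ image_subset_image (Icc_subset_Icc hi hj)), pair_comm]

theorem lt_and_add_three_le_of_split_notMem (hf : Set.InjOn f ↑(Icc 1 X.card))
    (hfX : (Icc 1 X.card).image f = X) {𝒮' : Finset (Finset (Finset α))}
    (h𝒮' : IsSplitSystem X 𝒮') {i j : ℕ} (hi : 1 ≤ i) (hj : j ≤ X.card)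
    (hsplit : IsSplit X {(Icc i j).image f, X \ (Icc i j).image f})
    (hnot : {(Icc i j).image f, X \ (Icc i j).image f} ∉ 𝒮') :
    i < j ∧ j + 3 ≤ X.card + i := by
  have hIcc : Icc i j ⊆ Icc 1 X.card := Icc_subset_Icc hi hj
  have hAX : (Icc i j).image f ⊆ X := hfX ▸ image_subset_image hIcc
  obtain ⟨hA, hB⟩ := two_le_card_of_split_notMem h𝒮' hAX hsplit hnot
  have hcard : ((Icc i j).image f).card = j + 1 - i := by
    rw [card_image_of_injOn (hf.mono (coe_subset.2 hIcc)), Nat.card_Icc]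
  rw [card_sdiff_of_subset hAX, hcard] at hB
  rw [hcard] at hA
  omega

theorem exists_phiNe_boundary (hf : Set.InjOn f ↑(Icc 1 X.card))
    (hfX : (Icc 1 X.card).image f = X) {𝒮' : Finset (Finset (Finset α))}
    (hinj : IsInjective X 𝒮') {i j : ℕ} (hi : 1 ≤ i) (hij : i < j) (hj : j ≤ X.card)
    (hcompl : j + 3 ≤ X.card + i) :
    ∃ T ∈ 𝒮', phiNe {f (cyclicPred X.card i), f i, f j}
      {f (cyclicPred X.card i), f i, f (cyclicSucc X.card j)} T := by
  set i' := cyclicPred X.card i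
  set j' := cyclicSucc X.card j
  have hiI : i ∈ Icc 1 X.card := mem_Icc.2 ⟨hi, hij.le.trans hj⟩
  have hjI : j ∈ Icc 1 X.card := mem_Icc.2 ⟨hi.trans hij.le, hj⟩
  have hi'I : i' ∈ Icc 1 X.card := cyclicPred_mem_Icc hiI
  have hj'I : j' ∈ Icc 1 X.card := cyclicSucc_mem_Icc hjI
  have hne : i' ≠ i ∧ i' ≠ j ∧ i' ≠ j' ∧ i ≠ j ∧ i ≠ j' ∧ j ≠ j' := by
    simp only [i', j', cyclicPred, cyclicSucc]
    split_ifs <;> omega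
  simp only [← hf.ne_iff hi'I hiI, ← hf.ne_iff hi'I hjI, ← hf.ne_iff hi'I hj'I,
    ← hf.ne_iff hiI hjI, ← hf.ne_iff hiI hj'I, ← hf.ne_iff hjI hj'I] at hne
  obtain ⟨h₁, h₂, h₃, h₄, h₅, h₆⟩ := hne
  have hmem : ∀ m ∈ Icc 1 X.card, f m ∈ X := fun m hm => hfX ▸ mem_image_of_mem f hm
  have hYY' : ({f i', f i, f j} : Finset α) ≠ {f i', f i, f j'} := by
    intro h
    have : f j' ∈ ({f i', f i, f j} : Finset α) := h ▸ by simp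
    simp [h₃.symm, h₅.symm, h₆.symm] at this
  exact hinj _ _ (by simp [insert_subset_iff, hmem, hi'I, hiI, hjI])
    (by simp [insert_subset_iff, hmem, hi'I, hiI, hj'I])
    (card_eq_three.2 ⟨_, _, _, h₁, h₂, h₄, rfl⟩) (card_eq_three.2 ⟨_, _, _, h₁, h₃, h₅, rfl⟩) hYY'

end Labelling

theorem statement3_general (X : Finset α)
    (𝒮 𝒮' : Finset (Finset (Finset α)))
    (h𝒮 : IsSplitSystem X 𝒮) (hcirc : IsCircular X 𝒮)
    (h𝒮' : IsSplitSystem X 𝒮') (hsub : 𝒮' ⊂ 𝒮) :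
    ¬ IsInjective X 𝒮' := by
  intro hinj
  obtain ⟨f, hf, hfX, hcirc⟩ := hcirc
  obtain ⟨S, hS, hS'⟩ := exists_of_ssubset hsub
  obtain ⟨i, j, hi, -, hj, rfl⟩ := hcirc S hS
  obtain ⟨hij, hcompl⟩ :=
    lt_and_add_three_le_of_split_notMem hf hfX h𝒮' hi hj (h𝒮.1 _ hS) hS'
  obtain ⟨T, hT, hphi⟩ := exists_phiNe_boundary hf hfX hinj hi hij hj hcompl
  obtain ⟨k, l, hk, hkl, hl, rfl⟩ := hcirc T (hsub.1 hT)
  exact hS' (split_eq_of_phiNe_boundary hf hfX hi hij.le hj (by omega) hk hkl hl hphi ▸ hT)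

/-- If `𝒮` is a circular split system on `X` (`|X| ≥ 4`) and `𝒮'` is
a split system on `X` properly contained in `𝒮`, then `𝒮'` is not injective. -/
theorem statement3 (X : Finset α) (hX : 4 ≤ X.card)
    (𝒮 𝒮' : Finset (Finset (Finset α)))
    (h𝒮 : IsSplitSystem X 𝒮) (hcirc : IsCircular X 𝒮)
    (h𝒮' : IsSplitSystem X 𝒮') (hsub : 𝒮' ⊂ 𝒮) :
    ¬ IsInjective X 𝒮' :=
  statement3_general X 𝒮 𝒮' h𝒮 hcirc h𝒮' hsub

end InjectiveSplitSystems
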